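/- Let k, l ∈ ℤ, let r ≥ 1 be an integer, and let a_0, …, a_r be rational numbers with Σ_{i=0}^r (−1)^i a_i = 0. Then there exist rational numbers b_0, …, b_{r−1} such that for all smooth f, g : ℍ → ℂ, Σ_{i=0}^r a_i · R_k^i(f) · R_l^{r−i}(g) = R_{k+l+2r−2}( Σ_{i=0}^{r−1} b_i · R_k^i(f) · R_l^{r−1−i}(g) ). -/

import Mathlib

noncomputable section

open Complex Real

/-- The upper half-plane, as a subset of `ℂ`. -/
def UHP : Set ℂ := {z : ℂ | 0 < z.im}

/-- `e(z) = exp(2πiz)`. -/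
def e (z : ℂ) : ℂ := Complex.exp (2 * (π : ℂ) * I * z)

/-- The Wirtinger derivative `∂f/∂τ = (1/2)(∂f/∂x − i ∂f/∂y)`. -/
def dtau (f : ℂ → ℂ) (z : ℂ) : ℂ := (fderiv ℝ f z 1 - I * fderiv ℝ f z I) / 2

/-- The raising operator `R_w f = (1/(2πi)) (∂f/∂τ + w f/(τ − τ̄))`. -/
def Rop (w : ℤ) (f : ℂ → ℂ) : ℂ → ℂ :=
  fun z => (1 / (2 * (π : ℂ) * I)) * (dtau f z + (w : ℂ) * f z / (z - (starRingEnd ℂ) z))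

/-- Iterated raising operator: `R_w^0 = id`, `R_w^{n+1} = R_{w+2n} ∘ R_w^n`. -/
def Riter (w : ℤ) : ℕ → (ℂ → ℂ) → (ℂ → ℂ)
  | 0 => fun f => f
  | n + 1 => fun f => Rop (w + 2 * n) (Riter w n f)

/-- Normalized derivative `f^{(r)} = (2πi)^{−r} d^r f/dτ^r`. -/
def fder (r : ℕ) (f : ℂ → ℂ) : ℂ → ℂ :=
  fun z => ((2 * (π : ℂ) * I) ^ r)⁻¹ * iteratedDeriv r f z

/-- The Rankin–Cohen bracket of `f` and `g` with weight parameters `k`, `l`: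
`[f,g]_r = Σ_{s=0}^r (−1)^s C(k+r−1,s) C(l+r−1,r−s) f^{(r−s)} g^{(s)}`. -/
def RCbracket (k l r : ℕ) (f g : ℂ → ℂ) : ℂ → ℂ :=
  fun z => ∑ s ∈ Finset.range (r + 1),
    (-1 : ℂ) ^ s * (Nat.choose (k + r - 1) s : ℂ) * (Nat.choose (l + r - 1) (r - s) : ℂ) *
      fder (r - s) f z * fder s g z

lemma UHP_open : IsOpen UHP := isOpen_lt continuous_const Complex.continuous_im

lemma sub_conj_ne {τ : ℂ} (hτ : τ ∈ UHP) : τ - (starRingEnd ℂ) τ ≠ 0 := by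
  have h : 0 < τ.im := hτ
  intro h0
  have := congrArg Complex.im h0
  simp [Complex.sub_im, Complex.conj_im] at this
  linarith

lemma conj_smooth : ContDiff ℝ (⊤ : ℕ∞) (fun z : ℂ => (starRingEnd ℂ) z) := by
  exact Complex.conjCLE.toContinuousLinearMap.contDiff

lemma Rop_smooth (w : ℤ) {f : ℂ → ℂ} (hf : ContDiffOn ℝ (⊤ : ℕ∞) f UHP) :
    ContDiffOn ℝ (⊤ : ℕ∞) (Rop w f) UHP := by
  have hfd : ContDiffOn ℝ (⊤ : ℕ∞) (fderiv ℝ f) UHP :=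
    hf.fderiv_of_isOpen UHP_open (by exact_mod_cast le_refl _)
  have hdt : ContDiffOn ℝ (⊤ : ℕ∞) (dtau f) UHP := by
    unfold dtau
    exact (((hfd.clm_apply contDiffOn_const).sub
      (contDiffOn_const.mul (hfd.clm_apply contDiffOn_const)))).div_const 2
  have hden : ContDiffOn ℝ (⊤ : ℕ∞) (fun z : ℂ => z - (starRingEnd ℂ) z) UHP :=
    (contDiff_id.sub conj_smooth).contDiffOn
  unfold Rop
  simp only [div_eq_mul_inv]
  exact contDiffOn_const.mul (hdt.add ((contDiffOn_const.mul hf).mul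
    (hden.inv fun z hz => sub_conj_ne hz)))

lemma dtau_mul {f g : ℂ → ℂ} {τ : ℂ} (hf : DifferentiableAt ℝ f τ)
    (hg : DifferentiableAt ℝ g τ) :
    dtau (fun z => f z * g z) τ = dtau f τ * g τ + f τ * dtau g τ := by
  unfold dtau
  rw [fderiv_fun_mul hf hg]
  simp only [ContinuousLinearMap.add_apply, ContinuousLinearMap.smul_apply, smul_eq_mul]
  ring

lemma dtau_const_mul (c : ℂ) {h : ℂ → ℂ} {τ : ℂ} (hh : DifferentiableAt ℝ h τ) :
    dtau (fun z => c * h z) τ = c * dtau h τ := by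
  unfold dtau
  rw [fderiv_const_mul hh]
  simp only [ContinuousLinearMap.smul_apply, smul_eq_mul]
  ring

lemma dtau_sum {s : Finset ℕ} {h : ℕ → ℂ → ℂ} {τ : ℂ}
    (hd : ∀ i ∈ s, DifferentiableAt ℝ (h i) τ) :
    dtau (fun z => ∑ i ∈ s, h i z) τ = ∑ i ∈ s, dtau (h i) τ := by
  unfold dtau
  rw [fderiv_fun_sum hd]
  simp only [ContinuousLinearMap.sum_apply, Finset.mul_sum, ← Finset.sum_sub_distrib,
    Finset.sum_div]

lemma Rop_mul (w1 w2 : ℤ) {f g : ℂ → ℂ} {τ : ℂ} (hτ : τ ∈ UHP)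
    (hf : DifferentiableAt ℝ f τ) (hg : DifferentiableAt ℝ g τ) :
    Rop (w1 + w2) (fun z => f z * g z) τ = Rop w1 f τ * g τ + f τ * Rop w2 g τ := by
  unfold Rop
  rw [dtau_mul hf hg]
  have h0 : τ - (starRingEnd ℂ) τ ≠ 0 := sub_conj_ne hτ
  have hπ : (π : ℂ) ≠ 0 := by exact_mod_cast Real.pi_ne_zero
  field_simp
  push_cast
  ring

lemma Rop_sum (w : ℤ) {s : Finset ℕ} (c : ℕ → ℂ) {h : ℕ → ℂ → ℂ} {τ : ℂ}
    (hd : ∀ i ∈ s, DifferentiableAt ℝ (h i) τ) :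
    Rop w (fun z => ∑ i ∈ s, c i * h i z) τ = ∑ i ∈ s, c i * Rop w (h i) τ := by
  unfold Rop
  rw [dtau_sum (fun i hi => (hd i hi).const_mul (c i))]
  rw [Finset.sum_congr rfl fun i hi => dtau_const_mul (c i) (hd i hi)]
  simp only [Finset.mul_sum, Finset.sum_mul, Finset.sum_div, ← Finset.sum_add_distrib]
  refine Finset.sum_congr rfl fun i hi => ?_
  ring

lemma neg_one_pow_self_mul (i : ℕ) : ((-1 : ℚ) ^ i) * ((-1 : ℚ) ^ i) = 1 := by
  rw [← pow_add]; exact Even.neg_one_pow ⟨i, rfl⟩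

lemma telescope (m : ℕ) (A B T : ℕ → ℂ)
    (h0 : B 0 = A 0) (hrec : ∀ i, B i + B (i + 1) = A (i + 1)) (hm : B m = A (m + 1)) :
    ∑ j ∈ Finset.range (m + 2), A j * T j
      = ∑ i ∈ Finset.range (m + 1), B i * (T (i + 1) + T i) := by
  have e1 : ∑ i ∈ Finset.range (m + 1), B i * (T (i + 1) + T i)
      = (∑ i ∈ Finset.range (m + 1), B i * T (i + 1))
        + ∑ i ∈ Finset.range (m + 1), B i * T i := by
    rw [← Finset.sum_add_distrib]
    exact Finset.sum_congr rfl fun i _ => by ring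
  rw [e1, Finset.sum_range_succ (fun i => B i * T (i + 1)) m,
    Finset.sum_range_succ' (fun i => B i * T i) m,
    show m + 2 = (m + 1) + 1 from rfl,
    Finset.sum_range_succ (fun j => A j * T j) (m + 1),
    Finset.sum_range_succ' (fun j => A j * T j) m]
  have e2 : ∑ i ∈ Finset.range m, A (i + 1) * T (i + 1)
      = (∑ i ∈ Finset.range m, B i * T (i + 1))
        + ∑ i ∈ Finset.range m, B (i + 1) * T (i + 1) := by
    rw [← Finset.sum_add_distrib]
    exact Finset.sum_congr rfl fun i _ => by rw [← hrec i]; ring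
  rw [e2, h0, hm]; ring


/-- for `k, l ∈ ℤ`, an integer `r ≥ 1`, and rationals `a_0, …, a_r` with
`Σ_i (−1)^i a_i = 0`, there exist rationals `b_0, …, b_{r−1}` such that for all smooth
`f, g` on `ℍ`:
`Σ_{i=0}^r a_i R_k^i(f) R_l^{r−i}(g) = R_{k+l+2r−2}(Σ_{i=0}^{r−1} b_i R_k^i(f) R_l^{r−1−i}(g))`. -/
theorem stmt13 (k l : ℤ) (r : ℕ) (hr : 1 ≤ r) (a : ℕ → ℚ)
    (ha : ∑ i ∈ Finset.range (r + 1), (-1 : ℚ) ^ i * a i = 0) :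
    ∃ b : ℕ → ℚ,
      ∀ f g : ℂ → ℂ, ContDiffOn ℝ (⊤ : ℕ∞) f UHP → ContDiffOn ℝ (⊤ : ℕ∞) g UHP →
        ∀ τ ∈ UHP,
          (∑ i ∈ Finset.range (r + 1),
              (a i : ℂ) * Riter k i f τ * Riter l (r - i) g τ)
            = Rop (k + l + 2 * (r : ℤ) - 2)
                (fun z => ∑ i ∈ Finset.range r,
                  (b i : ℂ) * Riter k i f z * Riter l (r - 1 - i) g z) τ := by
  obtain ⟨m, rfl⟩ : ∃ m, r = m + 1 := ⟨r - 1, by omega⟩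
  set b : ℕ → ℚ := fun i => (-1) ^ i * ∑ j ∈ Finset.range (i + 1), (-1 : ℚ) ^ j * a j with hbdef
  have hb0 : b 0 = a 0 := by simp [hbdef]
  have hbrec : ∀ i, b i + b (i + 1) = a (i + 1) := by
    intro i
    simp only [hbdef, Finset.sum_range_succ]
    linear_combination (a (i + 1)) * neg_one_pow_self_mul i
  have hbm : b m = a (m + 1) := by
    rw [Finset.sum_range_succ] at ha
    simp only [hbdef]
    linear_combination ((-1 : ℚ) ^ m) * ha + (a (m + 1)) * neg_one_pow_self_mul m
  refine ⟨b, ?_⟩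
  intro f g hf hg τ hτ
  have hF : ∀ i, ContDiffOn ℝ (⊤ : ℕ∞) (Riter k i f) UHP := by
    intro i; induction i with
    | zero => exact hf.of_le (by simp)
    | succ n ih => exact Rop_smooth _ ih
  have hG : ∀ i, ContDiffOn ℝ (⊤ : ℕ∞) (Riter l i g) UHP := by
    intro i; induction i with
    | zero => exact hg.of_le (by simp)
    | succ n ih => exact Rop_smooth _ ih
  have hFd : ∀ i, DifferentiableAt ℝ (Riter k i f) τ := fun i =>
    ((hF i).contDiffAt (UHP_open.mem_nhds hτ)).differentiableAt (by simp)
  have hGd : ∀ i, DifferentiableAt ℝ (Riter l i g) τ := fun i =>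
    ((hG i).contDiffAt (UHP_open.mem_nhds hτ)).differentiableAt (by simp)
  set W : ℤ := k + l + 2 * ((m : ℤ) + 1) - 2 with hWdef
  set T : ℕ → ℂ := fun j => Riter k j f τ * Riter l (m + 1 - j) g τ with hTdef
  have hRHSfun : (fun z => ∑ i ∈ Finset.range (m + 1),
        (b i : ℂ) * Riter k i f z * Riter l (m + 1 - 1 - i) g z)
      = fun z => ∑ i ∈ Finset.range (m + 1),
        (b i : ℂ) * (Riter k i f z * Riter l (m - i) g z) := by
    funext z
    exact Finset.sum_congr rfl fun i _ => by
      rw [mul_assoc, show m + 1 - 1 - i = m - i from by omega]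
  have hcast : ((m : ℤ) + 1) = ((m + 1 : ℕ) : ℤ) := by push_cast; ring
  rw [show (k + l + 2 * (((m + 1 : ℕ)) : ℤ) - 2) = W by rw [hWdef, hcast], hRHSfun,
    Rop_sum W (fun i => (b i : ℂ)) (h := fun i z => Riter k i f z * Riter l (m - i) g z) (fun i _ => (hFd i).mul (hGd (m - i)))]
  have key : ∀ i ∈ Finset.range (m + 1),
      (b i : ℂ) * Rop W (fun z => Riter k i f z * Riter l (m - i) g z) τ
        = (b i : ℂ) * (T (i + 1) + T i) := by
    intro i hi
    have him : i ≤ m := by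
      have := Finset.mem_range.mp hi; omega
    have hW : W = (k + 2 * (i : ℤ)) + (l + 2 * (((m - i : ℕ)) : ℤ)) := by
      rw [hWdef]
      have : (((m - i : ℕ)) : ℤ) = (m : ℤ) - (i : ℤ) := by
        exact_mod_cast Int.ofNat_sub him
      rw [this]; ring
    rw [hW, Rop_mul _ _ hτ (hFd i) (hGd (m - i))]
    simp only [hTdef]
    rw [show m + 1 - (i + 1) = m - i from by omega,
      show m + 1 - i = (m - i) + 1 from by omega]
    simp only [Riter]
  rw [Finset.sum_congr rfl key]
  have hLHS : (∑ i ∈ Finset.range (m + 1 + 1),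
        (a i : ℂ) * Riter k i f τ * Riter l (m + 1 - i) g τ)
      = ∑ j ∈ Finset.range (m + 2), (a j : ℂ) * T j := by
    exact Finset.sum_congr rfl fun i _ => by rw [mul_assoc]
  rw [hLHS]
  refine telescope m (fun j => (a j : ℂ)) (fun i => (b i : ℂ)) T ?_ ?_ ?_
  · show ((b 0 : ℚ) : ℂ) = ((a 0 : ℚ) : ℂ); exact_mod_cast hb0
  · intro i
    show ((b i : ℚ) : ℂ) + ((b (i + 1) : ℚ) : ℂ) = ((a (i + 1) : ℚ) : ℂ)
    exact_mod_cast hbrec i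
  · show ((b m : ℚ) : ℂ) = ((a (m + 1) : ℚ) : ℂ); exact_mod_cast hbm
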